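/- For all unit vectors z, z' ∈ ℂ^N, the classes [z] and [z'] have nonempty intersection if and only if z ∼ z' (i.e., z and z' differ by an overall phase); consequently the classes [z] for distinct rays are pairwise disjoint subsets of the space of Borel probability measures on Λ. -/

import Mathlib

open MeasureTheory
open scoped Classical

namespace SPI

/-! ## Ontology -/

/-- Ontic states: particle position `q`, field amplitudes `u`, field strengths `τ`. -/
abbrev Lam (N : ℕ) := Fin N × (Fin N → ℂ) × (Fin N → ℝ)

/-- The constraint region of `Λ`: `|u j| ≤ 1` and `τ j ∈ [0,1]`. -/
def onticSet (N : ℕ) : Set (Lam N) :=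
  {l | (∀ j, ‖l.2.1 j‖ ≤ 1) ∧ ∀ j, l.2.2 j ∈ Set.Icc (0 : ℝ) 1}

/-- Highest field strength `τ_max`. -/
noncomputable def tmax {N : ℕ} (τ : Fin N → ℝ) : ℝ := ⨆ j, τ j

/-- `Δ_τ u` : the amplitude vector with only maximal-strength entries retained. -/
noncomputable def deltaVec {N : ℕ} (τ : Fin N → ℝ) (u : Fin N → ℂ) : Fin N → ℂ :=
  fun j => if τ j = tmax τ then u j else 0

/-- Proportionality `z ∼ z'` of complex vectors (a nonzero multiple). -/
def Propto {N : ℕ} (v w : Fin N → ℂ) : Prop := ∃ α : ℂ, α ≠ 0 ∧ v = α • w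

/-- The subset `Λ_z^i` of the ontic state space. -/
def lamSet {N : ℕ} (z : Fin N → ℂ) (i : Fin N) : Set (Lam N) :=
  {l | l.1 = i ∧ l.2.2 i = tmax l.2.2 ∧ 0 < tmax l.2.2 ∧ Propto (deltaVec l.2.2 l.2.1) z}

/-- Membership in the auxiliary class `[z]_i`: a (Borel) probability measure giving
full measure to `Λ_z^i`. -/
def memClassI {N : ℕ} (z : Fin N → ℂ) (i : Fin N) (μ : Measure (Lam N)) : Prop :=
  IsProbabilityMeasure μ ∧ μ (lamSet z i) = 1

/-- Membership in the class `[z]` (for a unit vector `z`): mixtures `∑ |z i|² • pᵢ`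
with `pᵢ ∈ [z]_i` (terms with `z i = 0` omitted). -/
def memClass {N : ℕ} (z : Fin N → ℂ) (μ : Measure (Lam N)) : Prop :=
  ∃ f : Fin N → Measure (Lam N),
    (∀ i, z i ≠ 0 → memClassI z i (f i)) ∧
    μ = ∑ i, ENNReal.ofReal (‖z i‖ ^ 2) • f i

/-- The `j`-th standard basis vector of `ℂ^N`. -/
def eVec {N : ℕ} (j : Fin N) : Fin N → ℂ := fun m => if m = j then 1 else 0

/-! ## Parallel gate configurations -/

/-- A parallel gate configuration: a partition of the paths `{1,…,N}` into free paths `Fr`,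
detector paths `De`, phase-shifter paths `Sh` (phases `ω`), and a collection `Bs` of pairwise
disjoint pairs (beam splitters with constants `R`, `T`, `R + T = 1`). -/
structure Config (N : ℕ) where
  Fr : Finset (Fin N)
  De : Finset (Fin N)
  Sh : Finset (Fin N)
  ω : Fin N → ℝ
  Bs : Finset (Fin N × Fin N)
  R : Fin N × Fin N → ℝ
  T : Fin N × Fin N → ℝ
  hR : ∀ p ∈ Bs, 0 ≤ R p
  hT : ∀ p ∈ Bs, 0 ≤ T p
  hRT : ∀ p ∈ Bs, R p + T p = 1
  hst : ∀ p ∈ Bs, p.1 ≠ p.2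
  hBB : ∀ p ∈ Bs, ∀ q ∈ Bs, p ≠ q → p.1 ≠ q.1 ∧ p.1 ≠ q.2 ∧ p.2 ≠ q.1 ∧ p.2 ≠ q.2
  hFD : Disjoint Fr De
  hFS : Disjoint Fr Sh
  hDS : Disjoint De Sh
  hBdisj : ∀ p ∈ Bs, p.1 ∉ Fr ∧ p.2 ∉ Fr ∧ p.1 ∉ De ∧ p.2 ∉ De ∧ p.1 ∉ Sh ∧ p.2 ∉ Sh
  hcover : ∀ m : Fin N, m ∈ Fr ∨ m ∈ De ∨ m ∈ Sh ∨ ∃ p ∈ Bs, m = p.1 ∨ m = p.2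

/-- Path `m` enters some beam splitter of the configuration. -/
def inB {N : ℕ} (c : Config N) (m : Fin N) : Prop := ∃ p ∈ c.Bs, m = p.1 ∨ m = p.2

/-- The new field strengths `τ'` produced by the parallel gates. -/
noncomputable def newTau {N : ℕ} (c : Config N) (q : Fin N) (τ : Fin N → ℝ) : Fin N → ℝ :=
  fun m =>
    if m ∈ c.De then (if q = m then 1 else 0)
    else if hm : inB c m then max (τ hm.choose.1) (τ hm.choose.2) / 2
    else τ m / 2

/-- The new field amplitudes `u'` produced by the parallel gates. -/
noncomputable def newAmp {N : ℕ} (c : Config N) (q : Fin N) (u : Fin N → ℂ) (τ : Fin N → ℝ) :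
    Fin N → ℂ :=
  fun m =>
    if m ∈ c.De then (if q = m then 1 else u m)
    else if m ∈ c.Sh then Complex.exp (Complex.I * (c.ω m : ℂ)) * u m
    else if hm : inB c m then
      (let p := hm.choose
       let ts := max (τ p.1) (τ p.2)
       let us : ℂ := if τ p.1 = ts then u p.1 else 0
       let ut : ℂ := if τ p.2 = ts then u p.2 else 0
       if m = p.1 then
         Complex.I * (Real.sqrt (c.R p) : ℂ) * us + (Real.sqrt (c.T p) : ℂ) * ut
       else
         (Real.sqrt (c.T p) : ℂ) * us + Complex.I * (Real.sqrt (c.R p) : ℂ) * ut)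
    else u m

/-- One step of the dynamics: the Markov kernel `K` of the parallel gate configuration,
as a measure-valued map on ontic states. -/
noncomputable def step {N : ℕ} (c : Config N) (l : Lam N) : Measure (Lam N) :=
  let q := l.1
  let u' := newAmp c q l.2.1 l.2.2
  let τ' := newTau c q l.2.2
  if hq : inB c q then
    (let p := hq.choose
     let a := ‖u' p.1‖ ^ 2
     let b := ‖u' p.2‖ ^ 2
     if a + b = 0 then Measure.dirac (q, u', τ')
     else ENNReal.ofReal (a / (a + b)) • Measure.dirac (p.1, u', τ')
        + ENNReal.ofReal (b / (a + b)) • Measure.dirac (p.2, u', τ'))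
  else Measure.dirac (q, u', τ')

/-- The output measure `pK` of the kernel applied to an input measure `p`. -/
noncomputable def out {N : ℕ} (c : Config N) (μ : Measure (Lam N)) : Measure (Lam N) :=
  μ.bind (step c)

/-! ## Interferometric matrices -/

/-- The projector `P_j` onto component `j`. -/
def Pmat {N : ℕ} (j : Fin N) : Matrix (Fin N) (Fin N) ℂ :=
  Matrix.diagonal (fun a => if a = j then 1 else 0)

/-- The phase-shifter matrix `S_k(ω)`. -/
noncomputable def Smat {N : ℕ} (k : Fin N) (ω : ℝ) : Matrix (Fin N) (Fin N) ℂ :=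
  Matrix.diagonal (fun a => if a = k then Complex.exp (Complex.I * (ω : ℂ)) else 1)

/-- The beam-splitter matrix `B_st(R,T)`: identity outside `{s,t}` and
`[[i√R, √T],[√T, i√R]]` on components `{s,t}`. -/
noncomputable def Bmat {N : ℕ} (s t : Fin N) (R T : ℝ) : Matrix (Fin N) (Fin N) ℂ :=
  Matrix.of fun a b =>
    if a = s then
      (if b = s then Complex.I * (Real.sqrt R : ℂ) else if b = t then (Real.sqrt T : ℂ) else 0)
    else if a = t then
      (if b = s then (Real.sqrt T : ℂ) else if b = t then Complex.I * (Real.sqrt R : ℂ) else 0)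
    else if a = b then 1 else 0

/-- The matrix `Δ_τ` selecting the components of maximal strength. -/
noncomputable def Dmat {N : ℕ} (τ : Fin N → ℝ) : Matrix (Fin N) (Fin N) ℂ :=
  Matrix.diagonal (fun j => if τ j = tmax τ then 1 else 0)

/-- The matrix `Δ^(st)_τ` with `δ_{τ_s,max(τ_s,τ_t)}`, `δ_{τ_t,max(τ_s,τ_t)}` at `s`, `t`
and `1` elsewhere on the diagonal. -/
noncomputable def DmatST {N : ℕ} (τ : Fin N → ℝ) (s t : Fin N) : Matrix (Fin N) (Fin N) ℂ :=
  Matrix.diagonal (fun m =>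
    if m = s then (if τ s = max (τ s) (τ t) then 1 else 0)
    else if m = t then (if τ t = max (τ s) (τ t) then 1 else 0)
    else 1)

/-! ## Commutation lemmas -/

lemma commute_diagonal {N : ℕ} (d e : Fin N → ℂ) :
    Commute (Matrix.diagonal d) (Matrix.diagonal e) := by
  have h : (fun i => d i * e i) = fun i => e i * d i := funext fun i => mul_comm _ _
  show Matrix.diagonal d * Matrix.diagonal e = Matrix.diagonal e * Matrix.diagonal d
  rw [Matrix.diagonal_mul_diagonal, Matrix.diagonal_mul_diagonal, h]

lemma oneSubP_diagonal {N : ℕ} (j : Fin N) :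
    (1 : Matrix (Fin N) (Fin N) ℂ) - Pmat j
      = Matrix.diagonal (fun a => 1 - if a = j then 1 else 0) := by
  rw [Pmat, ← Matrix.diagonal_one, Matrix.diagonal_sub]

lemma commute_oneSubP {N : ℕ} (j j' : Fin N) :
    Commute ((1 : Matrix (Fin N) (Fin N) ℂ) - Pmat j) (1 - Pmat j') := by
  rw [oneSubP_diagonal, oneSubP_diagonal]; exact commute_diagonal _ _

/-- A matrix which differs from the identity only inside the block `{s,t} × {s,t}`. -/
def IsBlock {N : ℕ} (s t : Fin N) (M : Matrix (Fin N) (Fin N) ℂ) : Prop :=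
  ∀ a b, ¬((a = s ∨ a = t) ∧ (b = s ∨ b = t)) →
    M a b = (1 : Matrix (Fin N) (Fin N) ℂ) a b

lemma commute_of_isBlock {N : ℕ} {s t s' t' : Fin N} {M M' : Matrix (Fin N) (Fin N) ℂ}
    (hM : IsBlock s t M) (hM' : IsBlock s' t' M')
    (h1 : s ≠ s') (h2 : s ≠ t') (h3 : t ≠ s') (h4 : t ≠ t') : Commute M M' := by
  have hrow : ∀ a b : Fin N, a ≠ s → a ≠ t → (M - 1) a b = 0 := by
    intro a b ha hb
    have h := hM a b (by tauto)
    simp [Matrix.sub_apply, h]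
  have hcol : ∀ a b : Fin N, b ≠ s → b ≠ t → (M - 1) a b = 0 := by
    intro a b hb1 hb2
    have h := hM a b (by tauto)
    simp [Matrix.sub_apply, h]
  have hrow' : ∀ a b : Fin N, a ≠ s' → a ≠ t' → (M' - 1) a b = 0 := by
    intro a b ha hb
    have h := hM' a b (by tauto)
    simp [Matrix.sub_apply, h]
  have hcol' : ∀ a b : Fin N, b ≠ s' → b ≠ t' → (M' - 1) a b = 0 := by
    intro a b hb1 hb2
    have h := hM' a b (by tauto)
    simp [Matrix.sub_apply, h]
  have hEE' : (M - 1) * (M' - 1) = 0 := by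
    ext a b
    rw [Matrix.mul_apply, Matrix.zero_apply]
    apply Finset.sum_eq_zero
    intro k _
    by_cases hk : k = s ∨ k = t
    · have : (M' - 1) k b = 0 := by
        rcases hk with h | h
        · subst h; exact hrow' _ _ h1 h2
        · subst h; exact hrow' _ _ h3 h4
      rw [this, mul_zero]
    · push_neg at hk
      rw [hcol a k hk.1 hk.2, zero_mul]
  have hE'E : (M' - 1) * (M - 1) = 0 := by
    ext a b
    rw [Matrix.mul_apply, Matrix.zero_apply]
    apply Finset.sum_eq_zero
    intro k _
    by_cases hk : k = s' ∨ k = t'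
    · have : (M - 1) k b = 0 := by
        rcases hk with h | h
        · subst h; exact hrow _ _ (Ne.symm h1) (Ne.symm h3)
        · subst h; exact hrow _ _ (Ne.symm h2) (Ne.symm h4)
      rw [this, mul_zero]
    · push_neg at hk
      rw [hcol' a k hk.1 hk.2, zero_mul]
  have expand : ∀ A B : Matrix (Fin N) (Fin N) ℂ,
      A * B = (A - 1) * (B - 1) + A + B - 1 := by
    intro A B; noncomm_ring
  unfold Commute SemiconjBy
  rw [expand M M', expand M' M, hEE', hE'E]
  abel

lemma isBlock_Bmat {N : ℕ} (s t : Fin N) (R T : ℝ) : IsBlock s t (Bmat s t R T) := by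
  intro a b hab
  by_cases has : a = s ∨ a = t
  · have hbs : ¬(b = s ∨ b = t) := fun h => hab ⟨has, h⟩
    push_neg at hbs
    have hb : a ≠ b := by
      rcases has with h | h <;> subst h
      · exact fun hc => hbs.1 hc.symm
      · exact fun hc => hbs.2 hc.symm
    rw [Matrix.one_apply_ne hb]
    rcases has with h | h <;> subst h <;> simp [Bmat, hbs.1, hbs.2]
  · push_neg at has
    simp [Bmat, Matrix.one_apply, has.1, has.2]

lemma isBlock_one_sub_Pmat {N : ℕ} (j : Fin N) :
    IsBlock j j ((1 : Matrix (Fin N) (Fin N) ℂ) - Pmat j) := by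
  intro a b hab
  have haj : a ≠ j ∨ b ≠ j := by tauto
  rw [oneSubP_diagonal]
  by_cases h : a = b
  · subst h
    have haj' : a ≠ j := by tauto
    simp [Matrix.diagonal_apply_eq, Matrix.one_apply_eq, haj']
  · simp [Matrix.diagonal_apply_ne _ h, Matrix.one_apply_ne h]

lemma isBlock_Smat {N : ℕ} (k : Fin N) (ω : ℝ) : IsBlock k k (Smat k ω) := by
  intro a b hab
  have haj : a ≠ k ∨ b ≠ k := by tauto
  by_cases h : a = b
  · subst h
    have haj' : a ≠ k := by tauto
    simp [Smat, Matrix.diagonal_apply_eq, Matrix.one_apply_eq, haj']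
  · simp [Smat, Matrix.diagonal_apply_ne _ h, Matrix.one_apply_ne h]

lemma isBlock_mul_diag {N : ℕ} (s t : Fin N) (M : Matrix (Fin N) (Fin N) ℂ)
    (hM : IsBlock s t M) (d : Fin N → ℂ) (hd : ∀ m, m ≠ s → m ≠ t → d m = 1) :
    IsBlock s t (M * Matrix.diagonal d) := by
  intro a b hab
  rw [Matrix.mul_diagonal, hM a b hab]
  by_cases h : a = b
  · subst h
    have h1 : a ≠ s := fun hc => hab ⟨Or.inl hc, Or.inl hc⟩
    have h2 : a ≠ t := fun hc => hab ⟨Or.inr hc, Or.inr hc⟩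
    rw [Matrix.one_apply_eq, hd a h1 h2, mul_one]
  · rw [Matrix.one_apply_ne h, zero_mul]

lemma isBlock_BmatD {N : ℕ} (s t : Fin N) (R T : ℝ) (τ : Fin N → ℝ) :
    IsBlock s t (Bmat s t R T * DmatST τ s t) := by
  unfold DmatST
  refine isBlock_mul_diag s t _ (isBlock_Bmat s t R T) _ ?_
  intro m h1 h2
  simp [h1, h2]

/-! ## The matrix `W` of the configuration -/

noncomputable def Dprod {N : ℕ} (c : Config N) : Matrix (Fin N) (Fin N) ℂ :=
  c.De.noncommProd (fun j => 1 - Pmat j) (fun _ _ _ _ _ => commute_oneSubP _ _)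

noncomputable def Sprod {N : ℕ} (c : Config N) : Matrix (Fin N) (Fin N) ℂ :=
  c.Sh.noncommProd (fun k => Smat k (c.ω k)) (fun _ _ _ _ _ => commute_diagonal _ _)

noncomputable def Bprod {N : ℕ} (c : Config N) : Matrix (Fin N) (Fin N) ℂ :=
  c.Bs.noncommProd (fun p => Bmat p.1 p.2 (c.R p) (c.T p))
    (fun p hp q hq hpq => by
      obtain ⟨h1, h2, h3, h4⟩ := c.hBB p hp q hq hpq
      exact commute_of_isBlock (isBlock_Bmat _ _ _ _) (isBlock_Bmat _ _ _ _) h1 h2 h3 h4)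

/-- The matrix `W = ∏_{j∈D}(1−P_j) ∏_{k∈S} S_k(ω_k) ∏_{{s,t}∈B} B_st(R_st,T_st)`. -/
noncomputable def Wmat {N : ℕ} (c : Config N) : Matrix (Fin N) (Fin N) ℂ :=
  Dprod c * Sprod c * Bprod c

/-- The vector `W z`. -/
noncomputable def Wvec {N : ℕ} (c : Config N) (z : Fin N → ℂ) : Fin N → ℂ :=
  (Wmat c).mulVec z

/-- The product `∏_{{s,t}∈B} (B_st(R_st,T_st) Δ^(st)_τ)`. -/
noncomputable def BDprod {N : ℕ} (c : Config N) (τ : Fin N → ℝ) : Matrix (Fin N) (Fin N) ℂ :=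
  c.Bs.noncommProd (fun p => Bmat p.1 p.2 (c.R p) (c.T p) * DmatST τ p.1 p.2)
    (fun p hp q hq hpq => by
      obtain ⟨h1, h2, h3, h4⟩ := c.hBB p hp q hq hpq
      exact commute_of_isBlock (isBlock_BmatD _ _ _ _ _) (isBlock_BmatD _ _ _ _ _) h1 h2 h3 h4)

/-!
If `μ ∈ [z] ∩ [z']`, pick `i` with `z i ≠ 0`; then `μ (Λ_z^i) ≥ |z i|² > 0`, so in the mixture
presenting `μ` as an element of `[z']` some component `p_j ∈ [z']_j` charges `Λ_z^i`, and hence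
`Λ_z^i` meets `Λ_{z'}^j`. At a common point `Δ_τ u` is proportional to both `z` and `z'`.
Conversely, if `z = α z'` for unit vectors then `|α| = 1`, and the mixture of Dirac masses at the
points `(i, z, 1)` lies in both classes.
-/

section Propto

variable {N : ℕ}

lemma Propto.refl (v : Fin N → ℂ) : Propto v v := ⟨1, one_ne_zero, (one_smul ℂ v).symm⟩

lemma Propto.symm {v w : Fin N → ℂ} (h : Propto v w) : Propto w v := by
  obtain ⟨α, hα, rfl⟩ := h
  exact ⟨α⁻¹, inv_ne_zero hα, by rw [smul_smul, inv_mul_cancel₀ hα, one_smul]⟩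

lemma Propto.trans {u v w : Fin N → ℂ} (huv : Propto u v) (hvw : Propto v w) : Propto u w := by
  obtain ⟨α, hα, rfl⟩ := huv
  obtain ⟨β, hβ, rfl⟩ := hvw
  exact ⟨α * β, mul_ne_zero hα hβ, smul_smul α β w⟩

lemma setOf_propto_zero : {v : Fin N → ℂ | Propto v 0} = {0} := by
  ext v
  simp only [Set.mem_ofPred_eq, Set.mem_singleton_iff, Propto, smul_zero]
  exact ⟨fun ⟨_, _, hv⟩ => hv, fun hv => ⟨1, one_ne_zero, hv⟩⟩

lemma setOf_propto_of_ne_zero {w : Fin N → ℂ} (hw : w ≠ 0) :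
    {v : Fin N → ℂ | Propto v w} =
      ((ℂ ∙ w : Submodule ℂ (Fin N → ℂ)) : Set (Fin N → ℂ)) \ {0} := by
  ext v
  simp only [Set.mem_ofPred_eq, Set.mem_sdiff, SetLike.mem_coe, Submodule.mem_span_singleton,
    Set.mem_singleton_iff, Propto]
  constructor
  · rintro ⟨α, hα, rfl⟩
    exact ⟨⟨α, rfl⟩, smul_ne_zero hα hw⟩
  · rintro ⟨⟨α, rfl⟩, hv⟩
    exact ⟨α, left_ne_zero_of_smul hv, rfl⟩

lemma measurableSet_setOf_propto (w : Fin N → ℂ) :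
    MeasurableSet {v : Fin N → ℂ | Propto v w} := by
  rcases eq_or_ne w 0 with rfl | hw
  · rw [setOf_propto_zero]
    exact measurableSet_singleton 0
  · rw [setOf_propto_of_ne_zero hw]
    exact (Submodule.closed_of_finiteDimensional _).measurableSet.diff (measurableSet_singleton 0)

end Propto

section Measurability

variable {N : ℕ}

lemma measurable_tmax : Measurable (tmax : (Fin N → ℝ) → ℝ) :=
  Measurable.iSup fun j => measurable_pi_apply j

lemma measurable_deltaVec :
    Measurable fun x : (Fin N → ℝ) × (Fin N → ℂ) => deltaVec x.1 x.2 :=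
  measurable_pi_lambda _ fun j =>
    Measurable.ite (measurableSet_eq_fun ((measurable_pi_apply j).comp measurable_fst)
      (measurable_tmax.comp measurable_fst)) ((measurable_pi_apply j).comp measurable_snd)
      measurable_const

lemma measurableSet_lamSet (z : Fin N → ℂ) (i : Fin N) : MeasurableSet (lamSet z i) := by
  have hτ : Measurable fun l : Lam N => l.2.2 := measurable_snd.snd
  have hmax : Measurable fun l : Lam N => tmax l.2.2 := measurable_tmax.comp hτ
  have hΔ : Measurable fun l : Lam N => deltaVec l.2.2 l.2.1 :=
    measurable_deltaVec.comp (hτ.prodMk measurable_snd.fst)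
  simp only [lamSet, Set.ofPred_and]
  exact (measurable_fst (measurableSet_singleton i)).inter
    ((measurableSet_eq_fun ((measurable_pi_apply i).comp hτ) hmax).inter
      ((measurableSet_lt measurable_const hmax).inter (hΔ (measurableSet_setOf_propto z))))

end Measurability

section Classes

variable {N : ℕ}

lemma propto_of_mem_lamSet {z z' : Fin N → ℂ} {i j : Fin N} {l : Lam N} (hl : l ∈ lamSet z i)
    (hl' : l ∈ lamSet z' j) : Propto z z' :=
  hl.2.2.2.symm.trans hl'.2.2.2

lemma tmax_const [Nonempty (Fin N)] (c : ℝ) : tmax (fun _ : Fin N => c) = c := ciSup_const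

lemma mk_one_mem_lamSet {v w : Fin N → ℂ} (h : Propto v w) (i : Fin N) :
    ((i, v, fun _ => 1) : Lam N) ∈ lamSet w i := by
  have : Nonempty (Fin N) := ⟨i⟩
  have hΔ : deltaVec (fun _ : Fin N => (1 : ℝ)) v = v :=
    funext fun m => by simp [deltaVec, tmax_const]
  refine ⟨rfl, (tmax_const 1).symm, by simp [tmax_const], ?_⟩
  change Propto (deltaVec (fun _ => 1) v) w
  rwa [hΔ]

/-- At full field strength `τ ≡ 1` we have `Δ_τ v = v`, so the `i`-th atom lies in `Λ_w^i` for
every `w ∼ v`. -/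
noncomputable def diracMixture (v : Fin N → ℂ) : Measure (Lam N) :=
  ∑ i, ENNReal.ofReal (‖v i‖ ^ 2) • Measure.dirac ((i, v, fun _ => 1) : Lam N)

lemma memClass_diracMixture {v w : Fin N → ℂ} (h : Propto v w) (hnorm : ∀ m, ‖v m‖ = ‖w m‖) :
    memClass w (diracMixture v) := by
  refine ⟨fun i => Measure.dirac ((i, v, fun _ => 1) : Lam N), fun i _ => ?_, ?_⟩
  · exact ⟨inferInstance, Measure.dirac_apply_of_mem (mk_one_mem_lamSet h i)⟩
  · simp only [diracMixture, hnorm]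

lemma norm_eq_of_propto {v w : Fin N → ℂ} (h : Propto v w)
    (hsum : ∑ m, ‖v m‖ ^ 2 = ∑ m, ‖w m‖ ^ 2) (m : Fin N) : ‖v m‖ = ‖w m‖ := by
  obtain ⟨α, -, rfl⟩ := h
  simp only [Pi.smul_apply, smul_eq_mul, norm_mul, mul_pow, ← Finset.mul_sum] at hsum ⊢
  rcases eq_or_ne ‖α‖ 1 with hα | hα
  · rw [hα, one_mul]
  · have hα2 : ‖α‖ ^ 2 ≠ 1 := by
      rwa [Ne, pow_eq_one_iff_of_nonneg (norm_nonneg α) two_ne_zero]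
    have hw : ∑ m, ‖w m‖ ^ 2 = 0 := by
      by_contra hw
      exact hα2 ((mul_eq_right₀ hw).1 hsum)
    have hwm : ‖w m‖ ^ 2 = 0 :=
      (Finset.sum_eq_zero_iff_of_nonneg fun _ _ => sq_nonneg _).1 hw m (Finset.mem_univ m)
    rw [pow_eq_zero_iff two_ne_zero |>.1 hwm, mul_zero]

lemma inter_nonempty_of_measure_eq_one {α : Type*} [MeasurableSpace α] {μ : Measure α}
    [IsProbabilityMeasure μ] {A s : Set α} (hA : μ A = 1) (hs : MeasurableSet s) (hμs : μ s ≠ 0) :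
    (A ∩ s).Nonempty := by
  rw [← Set.not_disjoint_iff_nonempty_inter]
  intro hdisj
  have : 1 + μ s ≤ 1 + 0 := calc
    1 + μ s = μ (A ∪ s) := by rw [measure_union hdisj hs, hA]
    _ ≤ 1 + 0 := by rw [add_zero]; exact prob_le_one
  exact hμs (nonpos_iff_eq_zero.1 (ENNReal.le_of_add_le_add_left ENNReal.one_ne_top this))

lemma ofReal_norm_sq_le_of_memClass {z : Fin N → ℂ} {μ : Measure (Lam N)} (hμ : memClass z μ)
    {i : Fin N} (hi : z i ≠ 0) : ENNReal.ofReal (‖z i‖ ^ 2) ≤ μ (lamSet z i) := by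
  obtain ⟨f, hf, rfl⟩ := hμ
  calc ENNReal.ofReal (‖z i‖ ^ 2) = ENNReal.ofReal (‖z i‖ ^ 2) * f i (lamSet z i) := by
        rw [(hf i hi).2, mul_one]
    _ ≤ ∑ j, ENNReal.ofReal (‖z j‖ ^ 2) * f j (lamSet z i) :=
        Finset.single_le_sum (f := fun j => ENNReal.ofReal (‖z j‖ ^ 2) * f j (lamSet z i))
          (fun _ _ => zero_le) (Finset.mem_univ i)
    _ = _ := by simp [Measure.coe_finsetSum]

lemma exists_lamSet_inter_nonempty_of_memClass {z : Fin N → ℂ} {μ : Measure (Lam N)}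
    (hμ : memClass z μ) {s : Set (Lam N)} (hs : MeasurableSet s) (hμs : μ s ≠ 0) :
    ∃ j, (lamSet z j ∩ s).Nonempty := by
  obtain ⟨f, hf, rfl⟩ := hμ
  simp only [Measure.coe_finsetSum, Finset.sum_apply, Measure.smul_apply, smul_eq_mul] at hμs
  obtain ⟨j, -, hj⟩ := Finset.exists_ne_zero_of_sum_ne_zero hμs
  have hzj : z j ≠ 0 := fun h => hj (by simp [h])
  have : IsProbabilityMeasure (f j) := (hf j hzj).1
  exact ⟨j, inter_nonempty_of_measure_eq_one (hf j hzj).2 hs (right_ne_zero_of_mul hj)⟩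

end Classes

/-- For unit vectors `z`, `z'`, the classes `[z]` and `[z']` intersect
iff `z ∼ z'`; consequently classes for distinct rays are disjoint. -/
theorem class_inter_nonempty_iff {N : ℕ} (z z' : Fin N → ℂ)
    (hz : ∑ i, ‖z i‖ ^ 2 = 1) (hz' : ∑ i, ‖z' i‖ ^ 2 = 1) :
    ((∃ μ : Measure (Lam N), memClass z μ ∧ memClass z' μ) ↔ Propto z z') ∧
    (¬ Propto z z' →
      {μ : Measure (Lam N) | memClass z μ} ∩ {μ : Measure (Lam N) | memClass z' μ} = ∅) := by
  have key : (∃ μ : Measure (Lam N), memClass z μ ∧ memClass z' μ) ↔ Propto z z' := by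
    refine ⟨fun ⟨μ, hμ, hμ'⟩ => ?_, fun h => ⟨diracMixture z,
      memClass_diracMixture (Propto.refl z) fun _ => rfl,
      memClass_diracMixture h (norm_eq_of_propto h (hz.trans hz'.symm))⟩⟩
    obtain ⟨i, -, hi⟩ := Finset.exists_ne_zero_of_sum_ne_zero (hz ▸ one_ne_zero)
    have hzi : z i ≠ 0 := fun h => hi (by simp [h])
    have hμi : μ (lamSet z i) ≠ 0 :=
      (lt_of_lt_of_le (by positivity) (ofReal_norm_sq_le_of_memClass hμ hzi)).ne'
    obtain ⟨j, l, hl', hl⟩ :=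
      exists_lamSet_inter_nonempty_of_memClass hμ' (measurableSet_lamSet z i) hμi
    exact propto_of_mem_lamSet hl hl'
  exact ⟨key, fun h => Set.eq_empty_iff_forall_notMem.2 fun μ hμ => h (key.1 ⟨μ, hμ⟩)⟩

end SPI
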